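/- Let γ ∈ ℝ, 1 < p, ω > γ²/4, and let φ be the explicit delta-NLS profile. Suppose u ∈ H¹(ℝ) ∩ H²(ℝ∖{0}) satisfies −u'' + ωu − pφ^{p−1}u = 0 on (0,∞) and on (−∞,0), the jump condition u'(0⁺) − u'(0⁻) = −γu(0), and u(x) → 0 as |x| → ∞, and additionally u restricted to (0,∞) is a scalar multiple μ·φ'|_{(0,∞)} and u restricted to (−∞,0) is a scalar multiple ν·φ'|_{(−∞,0)}. Then μ = ν = 0, i.e., u ≡ 0, provided γ ≠ 0. -/

import Mathlib

open Real Filter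

noncomputable def artanh (z : ℝ) : ℝ := Real.log ((1 + z) / (1 - z)) / 2

noncomputable def phi (γ p ω : ℝ) : ℝ → ℝ := fun x =>
  (((p + 1) * ω / 2) *
      (1 / Real.cosh ((p - 1) * Real.sqrt ω / 2 * |x| +
        _root_.artanh (γ / (2 * Real.sqrt ω)))) ^ 2) ^ (1 / (p - 1))

lemma sinh_div_cosh_artanh {z : ℝ} (h1 : -1 < z) (h2 : z < 1) :
    Real.sinh (_root_.artanh z) / Real.cosh (_root_.artanh z) = z := by
  set t := _root_.artanh z with ht
  have hw : 0 < (1 + z) / (1 - z) := div_pos (by linarith) (by linarith)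
  have hE : Real.exp t * Real.exp t = (1 + z) / (1 - z) := by
    rw [← Real.exp_add]
    have : t + t = Real.log ((1 + z) / (1 - z)) := by rw [ht]; unfold _root_.artanh; ring
    rw [this, Real.exp_log hw]
  have hEp : 0 < Real.exp t := Real.exp_pos t
  have hE' : Real.exp t * Real.exp t * (1 - z) = 1 + z := by
    rw [hE]; field_simp; rw [mul_div_assoc, div_self (by linarith : (1:ℝ)-z ≠ 0), mul_one]
  have hch : Real.cosh t ≠ 0 := (Real.cosh_pos t).ne'
  rw [Real.sinh_eq, Real.cosh_eq, Real.exp_neg]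
  rw [div_eq_iff (by positivity)]
  have hz : (1:ℝ) - z ≠ 0 := by linarith
  field_simp
  linear_combination hE'

lemma hasDerivAt_F (A k c p : ℝ) (hA : 0 < A) (hp : 1 < p) (x : ℝ) :
    HasDerivAt (fun y => (A * (1 / Real.cosh (k * y + c)) ^ 2) ^ (1 / (p - 1)))
      (-(2 * k / (p - 1)) * (Real.sinh (k * x + c) / Real.cosh (k * x + c)) *
        (A * (1 / Real.cosh (k * x + c)) ^ 2) ^ (1 / (p - 1))) x := by
  have hp1 : (0:ℝ) < p - 1 := by linarith
  set s := k * x + c with hs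
  have h1 : HasDerivAt (fun y : ℝ => k * y + c) k x := by
    simpa using ((hasDerivAt_id x).const_mul k).add_const c
  have h2 : HasDerivAt (fun y => Real.cosh (k * y + c)) (Real.sinh s * k) x :=
    by have := (Real.hasDerivAt_cosh s).comp x h1; exact this
  have hc : Real.cosh s ≠ 0 := (Real.cosh_pos s).ne'
  have h3 : HasDerivAt (fun y => (Real.cosh (k * y + c))⁻¹)
      (-(Real.sinh s * k) / Real.cosh s ^ 2) x := h2.inv hc
  have h4 : HasDerivAt (fun y => A * ((Real.cosh (k * y + c))⁻¹) ^ 2)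
      (A * ((2 : ℕ) * ((Real.cosh s)⁻¹) ^ 1 * (-(Real.sinh s * k) / Real.cosh s ^ 2))) x :=
    (h3.pow 2).const_mul A
  have hpos : 0 < A * ((Real.cosh s)⁻¹) ^ 2 :=
    mul_pos hA (pow_pos (inv_pos.mpr (Real.cosh_pos s)) 2)
  have h5 := h4.rpow_const (p := 1 / (p - 1)) (Or.inl hpos.ne')
  have hfun : (fun y => (A * ((Real.cosh (k * y + c))⁻¹) ^ 2) ^ (1 / (p - 1)))
      = (fun y => (A * (1 / Real.cosh (k * y + c)) ^ 2) ^ (1 / (p - 1))) := by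
    simp [one_div]
  rw [hfun] at h5
  convert h5 using 1
  rw [Real.rpow_sub_one hpos.ne']
  simp only [one_div]
  field_simp
  ring

lemma hasDerivAt_F2 (A k c p ω : ℝ) (hA : 0 < A) (hp : 1 < p) (hω : 0 ≤ ω)
    (hk : k = (p - 1) * Real.sqrt ω / 2) (x : ℝ) :
    HasDerivAt (fun y => -Real.sqrt ω *
        (Real.sinh (k * y + c) / Real.cosh (k * y + c) *
          (A * (1 / Real.cosh (k * y + c)) ^ 2) ^ (1 / (p - 1))))
      ((ω * (Real.sinh (k * x + c) / Real.cosh (k * x + c)) ^ 2 -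
          (p - 1) * ω / 2 * (1 / Real.cosh (k * x + c)) ^ 2) *
        (A * (1 / Real.cosh (k * x + c)) ^ 2) ^ (1 / (p - 1))) x := by
  have hp1 : (0:ℝ) < p - 1 := by linarith
  set s := k * x + c with hs
  have hc : Real.cosh s ≠ 0 := (Real.cosh_pos s).ne'
  have hcs : Real.cosh s ^ 2 - Real.sinh s ^ 2 = 1 := Real.cosh_sq_sub_sinh_sq s
  have hss : Real.sqrt ω * Real.sqrt ω = ω := Real.mul_self_sqrt hω
  have h1 : HasDerivAt (fun y : ℝ => k * y + c) k x := by
    simpa using ((hasDerivAt_id x).const_mul k).add_const c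
  have hsinh : HasDerivAt (fun y => Real.sinh (k * y + c)) (Real.cosh s * k) x :=
    by have := (Real.hasDerivAt_sinh s).comp x h1; exact this
  have hcosh : HasDerivAt (fun y => Real.cosh (k * y + c)) (Real.sinh s * k) x :=
    by have := (Real.hasDerivAt_cosh s).comp x h1; exact this
  have hTd : HasDerivAt (fun y => Real.sinh (k * y + c) / Real.cosh (k * y + c))
      ((Real.cosh s * k * Real.cosh s - Real.sinh s * (Real.sinh s * k)) / Real.cosh s ^ 2) x :=
    hsinh.div hcosh hc
  have hFd := hasDerivAt_F A k c p hA hp x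
  have hfin := (hTd.mul hFd).const_mul (-Real.sqrt ω)
  have key : ∀ S Q : ℝ, Real.cosh S ≠ 0 → Real.cosh S ^ 2 - Real.sinh S ^ 2 = 1 →
      (ω * (Real.sinh S / Real.cosh S) ^ 2 - (p - 1) * ω / 2 * (1 / Real.cosh S) ^ 2) * Q =
      -Real.sqrt ω * ((Real.cosh S * k * Real.cosh S - Real.sinh S * (Real.sinh S * k)) /
          Real.cosh S ^ 2 * Q +
        Real.sinh S / Real.cosh S * (-(2 * k / (p - 1)) * (Real.sinh S / Real.cosh S) * Q)) := by
    intro S Q h1 h2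
    rw [hk]
    field_simp
    linear_combination (Q * Real.sqrt ω ^ 2 * (p - 1)) * h2
      - ((2 * Real.sinh S ^ 2 - (p - 1)) * Q) * hss
  convert hfin using 1
  exacts [rfl, rfl, rfl, key s ((A * (1 / Real.cosh s) ^ 2) ^ (1 / (p - 1))) hc hcs]

set_option maxHeartbeats 1000000 in
theorem stmt13 (γ p ω : ℝ) (hγ : γ ≠ 0) (hp : 1 < p) (hω : γ ^ 2 / 4 < ω)
    (u : ℝ → ℝ) (μ ν a b : ℝ)
    (hu : Continuous u)
    (hode : ∀ x : ℝ, x ≠ 0 →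
      -(deriv (deriv u) x) + ω * u x - p * phi γ p ω x ^ (p - 1) * u x = 0)
    (hjumpR : Tendsto (deriv u) (nhdsWithin 0 (Set.Ioi 0)) (nhds a))
    (hjumpL : Tendsto (deriv u) (nhdsWithin 0 (Set.Iio 0)) (nhds b))
    (hjump : a - b = -γ * u 0)
    (hdecayT : Tendsto u atTop (nhds 0)) (hdecayB : Tendsto u atBot (nhds 0))
    (hμ : ∀ x : ℝ, 0 < x → u x = μ * deriv (phi γ p ω) x)
    (hν : ∀ x : ℝ, x < 0 → u x = ν * deriv (phi γ p ω) x) :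
    μ = 0 ∧ ν = 0 ∧ ∀ x, u x = 0 := by
  have hγ2 : 0 < γ ^ 2 := by positivity
  have hω0 : 0 < ω := by nlinarith
  have hsq : 0 < Real.sqrt ω := Real.sqrt_pos.mpr hω0
  have hss : Real.sqrt ω * Real.sqrt ω = ω := Real.mul_self_sqrt hω0.le
  set k : ℝ := (p - 1) * Real.sqrt ω / 2 with hk
  set c : ℝ := _root_.artanh (γ / (2 * Real.sqrt ω)) with hc
  set A : ℝ := (p + 1) * ω / 2 with hA
  have hApos : 0 < A := by rw [hA]; nlinarith
  set F : ℝ → ℝ := fun y => (A * (1 / Real.cosh (k * y + c)) ^ 2) ^ (1 / (p - 1)) with hF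
  set T : ℝ → ℝ := fun y => Real.sinh (k * y + c) / Real.cosh (k * y + c) with hT
  set W : ℝ → ℝ := fun y =>
    ω * T y ^ 2 - (p - 1) * ω / 2 * (1 / Real.cosh (k * y + c)) ^ 2 with hW
  -- phi agrees with F on the right, with F ∘ neg on the left
  have hphiR : ∀ y : ℝ, 0 ≤ y → phi γ p ω y = F y := by
    intro y hy
    simp only [phi, hF, hA, hk, hc]
    rw [abs_of_nonneg hy]
  have hphiL : ∀ y : ℝ, y ≤ 0 → phi γ p ω y = F (-y) := by
    intro y hy
    simp only [phi, hF, hA, hk, hc]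
    rw [abs_of_nonpos hy]
  -- derivative facts
  have hFd : ∀ y : ℝ, HasDerivAt F (-(2 * k / (p - 1)) * T y * F y) y := fun y =>
    hasDerivAt_F A k c p hApos hp y
  have hFd2 : ∀ y : ℝ, HasDerivAt (fun z => -Real.sqrt ω * (T z * F z)) (W y * F y) y :=
    fun y => hasDerivAt_F2 A k c p ω hApos hp hω0.le hk y
  have h2k : 2 * k / (p - 1) = Real.sqrt ω := by
    rw [hk]; field_simp
    rw [div_self (by linarith : p - 1 ≠ 0)]
  have hderivR : ∀ y : ℝ, 0 < y → deriv (phi γ p ω) y = -Real.sqrt ω * (T y * F y) := by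
    intro y hy
    have hev : phi γ p ω =ᶠ[nhds y] F := by
      filter_upwards [lt_mem_nhds hy] with z hz
      exact hphiR z hz.le
    rw [hev.deriv_eq, (hFd y).deriv, h2k]; ring
  have hderivL : ∀ y : ℝ, y < 0 → deriv (phi γ p ω) y = Real.sqrt ω * (T (-y) * F (-y)) := by
    intro y hy
    have hev : phi γ p ω =ᶠ[nhds y] fun z => F (-z) := by
      filter_upwards [gt_mem_nhds hy] with z hz
      exact hphiL z hz.le
    have hcomp : HasDerivAt (fun z : ℝ => F (-z))
        ((-(2 * k / (p - 1)) * T (-y) * F (-y)) * (-1)) y := by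
      have := (hFd (-y)).comp y (hasDerivAt_neg y)
      simpa [Function.comp_def] using this
    rw [hev.deriv_eq, hcomp.deriv, h2k]; ring
  -- derivative of u on each side
  have hderivuR : ∀ y : ℝ, 0 < y → deriv u y = μ * (W y * F y) := by
    intro y hy
    have hev : u =ᶠ[nhds y] fun z => μ * (-Real.sqrt ω * (T z * F z)) := by
      filter_upwards [lt_mem_nhds hy] with z hz
      rw [hμ z hz, hderivR z hz]
    rw [hev.deriv_eq, ((hFd2 y).const_mul μ).deriv]
  have hderivuL : ∀ y : ℝ, y < 0 → deriv u y = ν * (W (-y) * F (-y)) := by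
    intro y hy
    have hev : u =ᶠ[nhds y] fun z => -ν * (-Real.sqrt ω * (T (-z) * F (-z))) := by
      filter_upwards [gt_mem_nhds hy] with z hz
      rw [hν z hz, hderivL z hz]; ring
    have hcomp : HasDerivAt (fun z : ℝ => -Real.sqrt ω * (T (-z) * F (-z)))
        ((W (-y) * F (-y)) * (-1)) y := by
      have := (hFd2 (-y)).comp y (hasDerivAt_neg y)
      simpa [Function.comp_def] using this
    rw [hev.deriv_eq, (hcomp.const_mul (-ν)).deriv]; ring
  -- continuity of auxiliary functions
  have hFc : Continuous F := by
    have : Differentiable ℝ F := fun y => (hFd y).differentiableAt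
    exact this.continuous
  have hlin : Continuous fun y : ℝ => k * y + c :=
    (continuous_const.mul continuous_id).add continuous_const
  have hTc : Continuous T := by
    rw [hT]
    exact (Real.continuous_sinh.comp hlin).div (Real.continuous_cosh.comp hlin)
      fun y => (Real.cosh_pos _).ne'
  have hWc : Continuous W := by
    rw [hW]
    refine (continuous_const.mul (hTc.pow 2)).sub (continuous_const.mul ?_)
    exact (continuous_const.div (Real.continuous_cosh.comp hlin)
      fun y => (Real.cosh_pos _).ne').pow 2
  -- the one-sided limits of deriv u
  have ha : a = μ * (W 0 * F 0) := by
    refine tendsto_nhds_unique hjumpR ?_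
    have hcont : Tendsto (fun y => μ * (W y * F y)) (nhdsWithin 0 (Set.Ioi 0))
        (nhds (μ * (W 0 * F 0))) :=
      ((continuous_const.mul (hWc.mul hFc)).tendsto 0).mono_left nhdsWithin_le_nhds
    refine hcont.congr' ?_
    filter_upwards [self_mem_nhdsWithin] with y hy
    exact (hderivuR y hy).symm
  have hb : b = ν * (W 0 * F 0) := by
    refine tendsto_nhds_unique hjumpL ?_
    have hcont : Tendsto (fun y : ℝ => ν * (W (-y) * F (-y))) (nhdsWithin 0 (Set.Iio 0))
        (nhds (ν * (W 0 * F 0))) := by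
      have : Continuous fun y : ℝ => ν * (W (-y) * F (-y)) :=
        continuous_const.mul ((hWc.comp continuous_neg).mul (hFc.comp continuous_neg))
      simpa using (this.tendsto 0).mono_left nhdsWithin_le_nhds
    refine hcont.congr' ?_
    filter_upwards [self_mem_nhdsWithin] with y hy
    exact (hderivuL y hy).symm
  -- value of u at 0
  have hu0R : u 0 = μ * (-Real.sqrt ω * (T 0 * F 0)) := by
    refine tendsto_nhds_unique ((hu.tendsto 0).mono_left
      (nhdsWithin_le_nhds : nhdsWithin (0:ℝ) (Set.Ioi 0) ≤ nhds 0)) ?_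
    have hcont : Tendsto (fun y => μ * (-Real.sqrt ω * (T y * F y))) (nhdsWithin 0 (Set.Ioi 0))
        (nhds (μ * (-Real.sqrt ω * (T 0 * F 0)))) :=
      ((continuous_const.mul (continuous_const.mul (hTc.mul hFc))).tendsto 0).mono_left
        nhdsWithin_le_nhds
    refine hcont.congr' ?_
    filter_upwards [self_mem_nhdsWithin] with y hy
    rw [hμ y hy, hderivR y hy]
  have hu0L : u 0 = ν * (Real.sqrt ω * (T 0 * F 0)) := by
    refine tendsto_nhds_unique ((hu.tendsto 0).mono_left
      (nhdsWithin_le_nhds : nhdsWithin (0:ℝ) (Set.Iio 0) ≤ nhds 0)) ?_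
    have hcont : Tendsto (fun y : ℝ => ν * (Real.sqrt ω * (T (-y) * F (-y))))
        (nhdsWithin 0 (Set.Iio 0)) (nhds (ν * (Real.sqrt ω * (T 0 * F 0)))) := by
      have : Continuous fun y : ℝ => ν * (Real.sqrt ω * (T (-y) * F (-y))) :=
        continuous_const.mul (continuous_const.mul
          ((hTc.comp continuous_neg).mul (hFc.comp continuous_neg)))
      simpa using (this.tendsto 0).mono_left nhdsWithin_le_nhds
    refine hcont.congr' ?_
    filter_upwards [self_mem_nhdsWithin] with y hy
    rw [hν y hy, hderivL y hy]
  -- explicit values at 0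
  have hzlt : γ ^ 2 < (2 * Real.sqrt ω) ^ 2 := by nlinarith
  have h2s : 0 < 2 * Real.sqrt ω := by positivity
  have hz1 : -1 < γ / (2 * Real.sqrt ω) := by
    rw [lt_div_iff₀ h2s]; nlinarith
  have hz2 : γ / (2 * Real.sqrt ω) < 1 := by
    rw [div_lt_one h2s]; nlinarith
  have hT0 : T 0 = γ / (2 * Real.sqrt ω) := by
    rw [hT]
    simp only [mul_zero, zero_add]
    rw [hc]
    exact sinh_div_cosh_artanh hz1 hz2
  have hcs0 : Real.cosh c ^ 2 - Real.sinh c ^ 2 = 1 := Real.cosh_sq_sub_sinh_sq c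
  have hcne : Real.cosh c ≠ 0 := (Real.cosh_pos c).ne'
  have hsech0 : (1 / Real.cosh c) ^ 2 = 1 - T 0 ^ 2 := by
    rw [hT]
    simp only [mul_zero, zero_add]
    field_simp
    linarith
  have hF0 : 0 < F 0 := by
    rw [hF]
    exact Real.rpow_pos_of_pos (mul_pos hApos (by positivity)) _
  have hsT : Real.sqrt ω * T 0 = γ / 2 := by
    rw [hT0]; field_simp
  have hW0 : W 0 = γ ^ 2 / 4 - (p - 1) * (4 * ω - γ ^ 2) / 8 := by
    have h1 : W 0 = ω * T 0 ^ 2 - (p - 1) * ω / 2 * (1 / Real.cosh c) ^ 2 := by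
      rw [hW]; simp only [mul_zero, zero_add]
    rw [h1, hsech0, hT0]
    field_simp
    linear_combination (-(32 * γ ^ 2 * (1 + p))) * hss
  -- the three equations
  have e1 : u 0 = -(μ * (γ / 2) * F 0) := by
    rw [hu0R]; linear_combination (-(μ * F 0)) * hsT
  have e2 : u 0 = ν * (γ / 2) * F 0 := by
    rw [hu0L]; linear_combination (ν * F 0) * hsT
  have e3 : (μ + ν) * ((γ / 2) * F 0) = 0 := by linear_combination e1 - e2
  have hγF : (γ / 2) * F 0 ≠ 0 := mul_ne_zero (by positivity) hF0.ne'
  have hνμ : ν = -μ := by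
    rcases mul_eq_zero.mp e3 with h | h
    · linarith
    · exact absurd h hγF
  have e4 : μ * ((p - 1) * (4 * ω - γ ^ 2) / 4 * F 0) = 0 := by
    have := hjump
    rw [ha, hb, hνμ, e1, hW0] at this
    linear_combination -this
  have hpos4 : (p - 1) * (4 * ω - γ ^ 2) / 4 * F 0 ≠ 0 := by
    have h1 : 0 < (p - 1) * (4 * ω - γ ^ 2) / 4 := by nlinarith
    positivity
  have hμ0 : μ = 0 := by
    rcases mul_eq_zero.mp e4 with h | h
    · exact h
    · exact absurd h hpos4
  have hν0 : ν = 0 := by rw [hνμ, hμ0, neg_zero]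
  refine ⟨hμ0, hν0, fun x => ?_⟩
  rcases lt_trichotomy x 0 with hx | hx | hx
  · rw [hν x hx, hν0, zero_mul]
  · rw [hx, e1, hμ0]; ring
  · rw [hμ x hx, hμ0, zero_mul]
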